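/- arXiv:1709.08043 — 5 statements merged into one kernel-verified Lean document; each statement's English description precedes it below -/
import Mathlib

section
/- In the Brandt semigroup B_n, for nonzero b = (b¹,b²): the equation x² = b·x has exactly n² − 2n + 3 solutions if b¹ = b², and exactly n² − 2n + 2 solutions if b¹ ≠ b². -/
/-- The Brandt semigroup `B_n`: `none` is the zero element `0`, and
`some (i, j)` is the element `(i, j)` with `i, j ∈ {1, …, n}` (as `Fin n`). -/
abbrev Brandt (n : ℕ) : Type := Option (Fin n × Fin n)

/-- Multiplication on the Brandt semigroup. -/
def bmul {n : ℕ} : Brandt n → Brandt n → Brandt n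
  | some (e, k), some (l, m) => if k = l then some (e, m) else none
  | _, _ => none

/-!
A nonzero `x = (i, j)` has `x² ≠ 0` iff `i = j`, and `b·x ≠ 0` iff `i = b.2`; when both are
nonzero the equation reads `(i, i) = (b.1, i)`. So the solutions are `0`, the `(n - 1)²` pairs
with `i ≠ j` and `i ≠ b.2`, and, exactly when `b.1 = b.2`, the idempotent `(b.2, b.2)`.
-/

open Finset

@[simp]
theorem bmul_none_right {n : ℕ} (x : Brandt n) : bmul x none = none := by
  cases x <;> rfl

@[simp]
theorem bmul_some_some {n : ℕ} (e k l m : Fin n) :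
    bmul (some (e, k)) (some (l, m)) = if k = l then some (e, m) else none := rfl

theorem card_filter_fst_ne_snd_and_fst_ne {α : Type*} [Fintype α] [DecidableEq α] (c : α) :
    #{p : α × α | p.1 ≠ p.2 ∧ p.1 ≠ c} = (Fintype.card α - 1) ^ 2 := by
  have row (i : α) : #{j | i ≠ j ∧ i ≠ c} = if i = c then 0 else Fintype.card α - 1 := by
    split_ifs with h <;> simp [h, filter_ne, card_erase_of_mem]
  rw [card_filter, Fintype.sum_prod_type]
  simp only [← card_filter, row]
  simp [sum_ite, filter_ne', card_erase_of_mem, sq]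

theorem filter_bmul_self_eq_bmul_some {n : ℕ} (b : Fin n × Fin n) :
    ({x | bmul x x = bmul (some b) x} : Finset (Brandt n)) =
      insertNone (({p | p.1 ≠ p.2 ∧ p.1 ≠ b.2} : Finset (Fin n × Fin n)) ∪
        if b.1 = b.2 then {(b.2, b.2)} else ∅) := by
  ext (_ | ⟨i, j⟩)
  · simp
  · obtain ⟨b₁, b₂⟩ := b
    simp only [bmul_some_some, mem_filter_univ, some_mem_insertNone, mem_union]
    split_ifs <;> simp <;> grind

theorem card_bmul_self_eq_bmul_some (n : ℕ) (b : Fin n × Fin n) :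
    Nat.card {x : Brandt n // bmul x x = bmul (some b) x} =
      (n - 1) ^ 2 + (if b.1 = b.2 then 1 else 0) + 1 := by
  rw [Nat.card_eq_fintype_card, Fintype.card_subtype, filter_bmul_self_eq_bmul_some,
    card_insertNone, card_union_of_disjoint, card_filter_fst_ne_snd_and_fst_ne, Fintype.card_fin]
  · split_ifs <;> rfl
  · split_ifs <;> simp

/-- Solutions of `x² = b·x` in `B_n` for nonzero `b = (b¹,b²)`: exactly
`n² − 2n + 3` solutions if `b¹ = b²`, and exactly `n² − 2n + 2` if `b¹ ≠ b²`. -/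
theorem brandt_eq_sq_lmul (n : ℕ) (b : Fin n × Fin n) :
    (b.1 = b.2 →
      Nat.card {x : Brandt n // bmul x x = bmul (some b) x} =
        n ^ 2 + 3 - 2 * n) ∧
    (b.1 ≠ b.2 →
      Nat.card {x : Brandt n // bmul x x = bmul (some b) x} =
        n ^ 2 + 2 - 2 * n) := by
  have hn : 1 ≤ n := b.1.pos
  have hsq : (n - 1) ^ 2 + 2 * n = n ^ 2 + 1 := by
    zify [hn]; ring
  refine ⟨fun h => ?_, fun h => ?_⟩
  · rw [card_bmul_self_eq_bmul_some, if_pos h]; omega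
  · rw [card_bmul_self_eq_bmul_some, if_neg h]; omega
end

section
/- In the Brandt semigroup B_n, for nonzero b₁ = (b₁¹,b₁²), b₂ = (b₂¹,b₂²): the equation b₁·x = b₂·x has n² + 1 solutions if b₁ = b₂; exactly n² + 1 − n solutions if b₁ ≠ b₂ but b₁² = b₂²; and exactly n² − 2n + 1 solutions if b₁² ≠ b₂². -/
lemma count_aux {n : ℕ} (p : Brandt n → Prop) [DecidablePred p]
    (C : Fin n → Prop) [DecidablePred C]
    (h0 : p none) (hs : ∀ l m : Fin n, p (some (l, m)) ↔ C l) :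
    Nat.card {x : Brandt n // p x} = (Finset.univ.filter C).card * n + 1 := by
  rw [Nat.card_eq_fintype_card, Fintype.card_subtype]
  have : (Finset.univ.filter p)
      = Finset.insertNone ((Finset.univ.filter C) ×ˢ Finset.univ) := by
    ext x
    rcases x with _ | ⟨l, m⟩
    · simpa using h0
    · simp [Finset.mem_insertNone, hs l m]
  rw [this, Finset.card_insertNone, Finset.card_product, Finset.card_univ,
    Fintype.card_fin]

/-- Solutions of `b₁·x = b₂·x` in `B_n` for nonzero `b₁, b₂`: `n² + 1` solutions
if `b₁ = b₂`; `n² + 1 − n` if `b₁ ≠ b₂` but `b₁² = b₂²`; and `n² − 2n + 1` if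
`b₁² ≠ b₂²`. -/
theorem brandt_eq_lmul_lmul (n : ℕ) (b₁ b₂ : Fin n × Fin n) :
    (b₁ = b₂ →
      Nat.card {x : Brandt n // bmul (some b₁) x = bmul (some b₂) x} =
        n ^ 2 + 1) ∧
    (b₁ ≠ b₂ → b₁.2 = b₂.2 →
      Nat.card {x : Brandt n // bmul (some b₁) x = bmul (some b₂) x} =
        n ^ 2 + 1 - n) ∧
    (b₁.2 ≠ b₂.2 →
      Nat.card {x : Brandt n // bmul (some b₁) x = bmul (some b₂) x} =
        n ^ 2 + 1 - 2 * n) := by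

  obtain ⟨a, k⟩ := b₁
  obtain ⟨b, k'⟩ := b₂
  refine ⟨?_, ?_, ?_⟩
  · intro h
    rw [Prod.mk.injEq] at h
    obtain ⟨rfl, rfl⟩ := h
    rw [count_aux (fun x => bmul (some (a, k)) x = bmul (some (a, k)) x)
      (fun _ => True) rfl (fun l m => by simp)]
    simp [sq]
  · intro hne hk
    simp only at hk
    subst hk
    have hab : a ≠ b := fun h => hne (by simp [h])
    obtain ⟨m, rfl⟩ : ∃ m, n = m + 1 := ⟨n - 1, by have := k.pos; omega⟩
    rw [count_aux (fun x => bmul (some (a, k)) x = bmul (some (b, k)) x)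
      (fun l => k ≠ l) rfl (fun l m => ?_)]
    · rw [Finset.filter_ne, Finset.card_erase_of_mem (Finset.mem_univ _),
        Finset.card_univ, Fintype.card_fin]
      simp only [Nat.add_sub_cancel]
      rw [show (m + 1) ^ 2 = m * (m + 1) + (m + 1) by ring]
      generalize m * (m + 1) = q
      omega
    · simp only [bmul]
      by_cases h : k = l
      · simp [h, hab]
      · simp [h]
  · intro hk
    simp only at hk
    have h2n : 2 ≤ n := by
      rcases n with _ | _ | m
      · exact k.elim0
      · have h1 := k.isLt
        have h2 := k'.isLt
        exact absurd (Fin.ext (by omega)) hk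
      · omega
    obtain ⟨m, rfl⟩ : ∃ m, n = m + 2 := ⟨n - 2, by omega⟩
    rw [count_aux (fun x => bmul (some (a, k)) x = bmul (some (b, k')) x)
      (fun l => k ≠ l ∧ k' ≠ l) rfl (fun l m => ?_)]
    · have : (Finset.univ.filter fun l : Fin (m + 2) => k ≠ l ∧ k' ≠ l)
          = Finset.univ \ {k, k'} := by
        ext l
        simp [eq_comm, and_comm]
      rw [this, Finset.card_sdiff_of_subset (by simp), Finset.card_univ, Fintype.card_fin,
        Finset.card_pair hk]
      simp only [Nat.add_sub_cancel]
      rw [show (m + 2) ^ 2 = m * (m + 2) + 2 * (m + 2) by ring]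
      generalize m * (m + 2) = q
      omega
    · simp only [bmul]
      by_cases h : k = l <;> by_cases h' : k' = l
      · exact absurd (h.trans h'.symm) hk
      · simp [h, h']
      · simp [h, h']
      · simp [h, h']
end

section
/- In the Brandt semigroup B_n, for nonzero b₁ = (b₁¹,b₁²), b₂ = (b₂¹,b₂²): the equation b₁·x = x·b₂ has exactly n² − 2n + 3 solutions if b₁¹ = b₁² and b₂¹ = b₂², and exactly n² − 2n + 2 solutions otherwise. -/
def optEquiv {α : Type*} (P : Option α → Prop) (h : P none) :
    {x : Option α // P x} ≃ Option {a : α // P (some a)} where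
  toFun x := match x with
    | ⟨none, _⟩ => none
    | ⟨some a, ha⟩ => some ⟨a, ha⟩
  invFun y := match y with
    | none => ⟨none, h⟩
    | some ⟨a, ha⟩ => ⟨some a, ha⟩
  left_inv := by rintro ⟨(_|a), h⟩ <;> rfl
  right_inv := by rintro (_|⟨a, ha⟩) <;> rfl

/-- Solutions of `b₁·x = x·b₂` in `B_n` for nonzero `b₁, b₂`: exactly
`n² − 2n + 3` solutions if `b₁¹ = b₁²` and `b₂¹ = b₂²`, and exactly
`n² − 2n + 2` otherwise. -/
theorem brandt_eq_lmul_rmul (n : ℕ) (b₁ b₂ : Fin n × Fin n) :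
    (b₁.1 = b₁.2 ∧ b₂.1 = b₂.2 →
      Nat.card {x : Brandt n // bmul (some b₁) x = bmul x (some b₂)} =
        n ^ 2 + 3 - 2 * n) ∧
    (¬ (b₁.1 = b₁.2 ∧ b₂.1 = b₂.2) →
      Nat.card {x : Brandt n // bmul (some b₁) x = bmul x (some b₂)} =
        n ^ 2 + 2 - 2 * n) := by
  have hn : 0 < n := b₁.1.pos
  obtain ⟨m, rfl⟩ : ∃ m, n = m + 1 := ⟨n - 1, by omega⟩
  obtain ⟨a, b⟩ := b₁
  obtain ⟨c, d⟩ := b₂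

  have hP : ∀ i j : Fin (m + 1),
      bmul (some (a, b)) (some (i, j)) = bmul (some (i, j)) (some (c, d)) ↔
      ((i ≠ b ∧ j ≠ c) ∨ (i = b ∧ j = c ∧ a = b ∧ c = d)) := by
    intro i j
    by_cases hb : b = i <;> by_cases hc : j = c <;>
      simp [bmul, hb, hc, Prod.ext_iff, eq_comm] <;> tauto
  have hcard : Nat.card {x : Brandt (m + 1) // bmul (some (a, b)) x = bmul x (some (c, d))} =
      1 + (Finset.univ.filter (fun p : Fin (m + 1) × Fin (m + 1) =>
        (p.1 ≠ b ∧ p.2 ≠ c) ∨ (p.1 = b ∧ p.2 = c ∧ a = b ∧ c = d))).card := by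
    have hnone : bmul (some (a, b)) (none : Brandt (m + 1)) = bmul none (some (c, d)) := rfl
    rw [Nat.card_congr
      (optEquiv (fun x : Brandt (m + 1) => bmul (some (a, b)) x = bmul x (some (c, d))) hnone),
      Nat.card_eq_fintype_card, Fintype.card_option, Fintype.card_subtype, Nat.add_comm]
    have he : (Finset.univ.filter (fun x : Fin (m + 1) × Fin (m + 1) =>
        bmul (some (a, b)) (some x) = bmul (some x) (some (c, d)))) =
        Finset.univ.filter (fun p : Fin (m + 1) × Fin (m + 1) =>
        (p.1 ≠ b ∧ p.2 ≠ c) ∨ (p.1 = b ∧ p.2 = c ∧ a = b ∧ c = d)) := by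
      ext ⟨i, j⟩
      simp only [Finset.mem_filter, Finset.mem_univ, true_and]
      exact hP i j
    exact congrArg (fun k => 1 + k) (congrArg Finset.card he)
  have hbase : (Finset.univ.filter (fun p : Fin (m + 1) × Fin (m + 1) =>
      p.1 ≠ b ∧ p.2 ≠ c)).card = m * m := by
    have : (Finset.univ.filter (fun p : Fin (m + 1) × Fin (m + 1) => p.1 ≠ b ∧ p.2 ≠ c)) =
        (Finset.univ.erase b) ×ˢ (Finset.univ.erase c) := by
      ext ⟨i, j⟩
      simp [and_comm]
    rw [this, Finset.card_product]
    simp [Finset.card_erase_of_mem]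
  constructor
  · rintro ⟨(rfl : a = b), (rfl : c = d)⟩
    rw [hcard]
    have : (Finset.univ.filter (fun p : Fin (m + 1) × Fin (m + 1) =>
        (p.1 ≠ a ∧ p.2 ≠ c) ∨ (p.1 = a ∧ p.2 = c ∧ a = a ∧ c = c))).card
        = m * m + 1 := by
      rw [Finset.filter_or, Finset.card_union_of_disjoint]
      · rw [hbase]
        congr 1
        rw [Finset.card_eq_one]
        refine ⟨(a, c), ?_⟩
        ext p
        simp [Prod.ext_iff]
      · rw [Finset.disjoint_filter]
        tauto
    rw [this]
    have h2 : (m + 1) ^ 2 = m * m + 2 * m + 1 := by ring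
    omega
  · intro hne
    rw [hcard]
    have : (Finset.univ.filter (fun p : Fin (m + 1) × Fin (m + 1) =>
        (p.1 ≠ b ∧ p.2 ≠ c) ∨ (p.1 = b ∧ p.2 = c ∧ a = b ∧ c = d))).card = m * m := by
      rw [← hbase]
      apply congrArg Finset.card
      ext p
      simp only [Finset.mem_filter, Finset.mem_univ, true_and]
      constructor
      · rintro (h | ⟨_, _, h1, h2⟩)
        · exact h
        · exact absurd ⟨h1, h2⟩ hne
      · exact Or.inl
    rw [this]
    have h2 : (m + 1) ^ 2 = m * m + 2 * m + 1 := by ring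
    omega
end

section
/- In the Brandt semigroup B_n, for nonzero b = (b¹,b²), c = (c¹,c²), d = (d¹,d²): the equation b·x = c·x·d has exactly n² − n + 2 solutions if c² = b² and (c¹,d²) = (b¹,d¹); exactly n² + 1 − n solutions if c² = b² but (c¹,d²) ≠ (b¹,d¹); and exactly n² − n solutions if c² ≠ b². -/
/-!
Write `x = (i, j)`. Then `b·x ≠ 0` iff `i = b²`, and `c·x·d ≠ 0` iff `i = c²` and `j = d¹`.
So `0` and every `x` outside the rows `b²` and `c²` solve the equation, and the nonzero
non-solutions are: if `c² = b²`, the row `b²`, except `(b², d¹)` when both sides there equal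
`(b¹, d¹) = (c¹, d²)`; if `c² ≠ b²`, the row `b²` together with `(c², d¹)`.
Counting them among the `n² + 1` elements gives the three formulas.
-/

open Finset

theorem Option.natCard_subtype_of_none {α : Type*} [Fintype α] (P : Option α → Prop)
    [DecidablePred P] (h : P none) : Nat.card {x // P x} = #{a | P (some a)} + 1 := by
  rw [Nat.card_eq_fintype_card, Fintype.card_subtype, card_filter, Fintype.sum_option,
    card_filter, if_pos h, add_comm]

namespace Brandt

variable {n : ℕ}

@[simp]
theorem bmul_none_right (x : Brandt n) : bmul x none = none := by
  cases x <;> rfl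

@[simp]
theorem bmul_some_some (e k l m : Fin n) :
    bmul (some (e, k)) (some (l, m)) = if k = l then some (e, m) else none := rfl

def sandwichNonsolutions (b c d : Fin n × Fin n) : Finset (Fin n × Fin n) :=
  {x | bmul (some b) (some x) ≠ bmul (some c) (bmul (some x) (some d))}

theorem natCard_sandwich_add_card_nonsolutions (b c d : Fin n × Fin n) :
    Nat.card {x : Brandt n // bmul (some b) x = bmul (some c) (bmul x (some d))} +
      #(sandwichNonsolutions b c d) = n ^ 2 + 1 := by
  rw [Option.natCard_subtype_of_none
      (fun x => bmul (some b) x = bmul (some c) (bmul x (some d))) rfl, add_right_comm,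
    sandwichNonsolutions, card_filter_add_card_filter_not, card_univ, Fintype.card_prod,
    Fintype.card_fin, sq]

theorem sandwichNonsolutions_of_eq_of_eq {b c d : Fin n × Fin n} (h₂ : c.2 = b.2)
    (h₁ : (c.1, d.2) = (b.1, d.1)) : sandwichNonsolutions b c d = {b.2} ×ˢ univ.erase d.1 := by
  obtain ⟨b1, b2⟩ := b; obtain ⟨c1, c2⟩ := c; obtain ⟨d1, d2⟩ := d
  ext ⟨i, j⟩
  simp only [sandwichNonsolutions, ne_eq, mem_filter, mem_univ, true_and, mem_product,
    mem_singleton, mem_erase, bmul_some_some]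
  split_ifs <;> simp_all [eq_comm]

theorem sandwichNonsolutions_of_eq_of_ne {b c d : Fin n × Fin n} (h₂ : c.2 = b.2)
    (h₁ : (c.1, d.2) ≠ (b.1, d.1)) : sandwichNonsolutions b c d = {b.2} ×ˢ univ := by
  obtain ⟨b1, b2⟩ := b; obtain ⟨c1, c2⟩ := c; obtain ⟨d1, d2⟩ := d
  ext ⟨i, j⟩
  simp only [sandwichNonsolutions, ne_eq, mem_filter, mem_univ, true_and, mem_product,
    mem_singleton, bmul_some_some]
  split_ifs <;> simp_all [eq_comm]

theorem sandwichNonsolutions_of_ne {b c d : Fin n × Fin n} (h₂ : c.2 ≠ b.2) :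
    sandwichNonsolutions b c d = insert (c.2, d.1) ({b.2} ×ˢ univ) := by
  obtain ⟨b1, b2⟩ := b; obtain ⟨c1, c2⟩ := c; obtain ⟨d1, d2⟩ := d
  ext ⟨i, j⟩
  simp only [sandwichNonsolutions, ne_eq, mem_filter, mem_univ, true_and, mem_product,
    mem_singleton, mem_insert, Prod.mk.injEq, bmul_some_some]
  split_ifs <;> simp_all [eq_comm]

end Brandt

open Brandt

/-- Solutions of `b·x = c·x·d` in `B_n` for nonzero `b, c, d`: exactly
`n² − n + 2` solutions if `c² = b²` and `(c¹,d²) = (b¹,d¹)`; exactly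
`n² + 1 − n` if `c² = b²` but `(c¹,d²) ≠ (b¹,d¹)`; and exactly `n² − n`
if `c² ≠ b²`. -/
theorem brandt_eq_lmul_sandwich (n : ℕ) (b c d : Fin n × Fin n) :
    (c.2 = b.2 ∧ (c.1, d.2) = (b.1, d.1) →
      Nat.card {x : Brandt n //
          bmul (some b) x = bmul (some c) (bmul x (some d))} =
        n ^ 2 + 2 - n) ∧
    (c.2 = b.2 ∧ (c.1, d.2) ≠ (b.1, d.1) →
      Nat.card {x : Brandt n //
          bmul (some b) x = bmul (some c) (bmul x (some d))} =
        n ^ 2 + 1 - n) ∧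
    (c.2 ≠ b.2 →
      Nat.card {x : Brandt n //
          bmul (some b) x = bmul (some c) (bmul x (some d))} =
        n ^ 2 - n) := by
  have hcount := natCard_sandwich_add_card_nonsolutions b c d
  refine ⟨fun ⟨h₂, h₁⟩ => ?_, fun ⟨h₂, h₁⟩ => ?_, fun h₂ => ?_⟩
  · rw [sandwichNonsolutions_of_eq_of_eq h₂ h₁, card_product, card_singleton,
      card_erase_of_mem (mem_univ _), card_univ, Fintype.card_fin] at hcount
    have : 0 < n := b.1.pos
    omega
  · rw [sandwichNonsolutions_of_eq_of_ne h₂ h₁, card_product, card_singleton, card_univ,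
      Fintype.card_fin] at hcount
    omega
  · have hnotMem : (c.2, d.1) ∉ {b.2} ×ˢ (univ : Finset (Fin n)) := by simp [Ne.symm h₂]
    rw [sandwichNonsolutions_of_ne h₂, card_insert_of_notMem hnotMem, card_product,
      card_singleton, card_univ, Fintype.card_fin] at hcount
    omega
end

section
/- Every equation over the Brandt semigroup B_n of the form b·x·c = d·x·e with b, c, d, e nonzero has at least n² − 1 solutions (in particular, it is solvable for n ≥ 2, since x = 0 is always a solution). -/
lemma bmul_side_none {n : ℕ} (b c : Fin n × Fin n) (x : Brandt n)
    (h : x ≠ some (b.2, c.1)) :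
    bmul (some b) (bmul x (some c)) = none := by
  match x with
  | none => rfl
  | some (i, j) =>
    by_cases hj : j = c.1
    · subst hj
      by_cases hi : b.2 = i
      · exact absurd (by rw [hi]) h
      · simp [bmul, hi]
    · simp [bmul, hj]

/-- Every equation `b·x·c = d·x·e` over `B_n` with `b, c, d, e` nonzero has at
least `n² − 1` solutions; in particular `x = 0` is always a solution, so the
equation is solvable. -/
theorem brandt_sandwich_sandwich_solvable (n : ℕ) (b c d e : Fin n × Fin n) :
    n ^ 2 - 1 ≤
      Nat.card {x : Brandt n //
        bmul (some b) (bmul x (some c)) = bmul (some d) (bmul x (some e))} ∧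
    bmul (some b) (bmul (none : Brandt n) (some c)) =
      bmul (some d) (bmul (none : Brandt n) (some e)) := by
  constructor
  · rw [Nat.card_eq_fintype_card, Fintype.card_subtype]
    have hsub : Finset.univ.filter (fun x => ¬ (bmul (some b) (bmul x (some c)) = bmul (some d) (bmul x (some e)))) ⊆
        ({some (b.2, c.1), some (d.2, e.1)} : Finset (Brandt n)) := by
      intro x hx
      simp only [Finset.mem_filter, Finset.mem_univ, true_and] at hx
      simp only [Finset.mem_insert, Finset.mem_singleton]
      by_contra hcon
      push_neg at hcon
      exact hx (by show bmul (some b) (bmul x (some c)) = bmul (some d) (bmul x (some e))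
                   rw [bmul_side_none b c x hcon.1, bmul_side_none d e x hcon.2])
    have h2 : (Finset.univ.filter (fun x => ¬ (bmul (some b) (bmul x (some c)) = bmul (some d) (bmul x (some e))))).card ≤ 2 :=
      le_trans (Finset.card_le_card hsub) (Finset.card_insert_le _ _ |>.trans (by simp))
    have htot : (Finset.univ.filter (fun x => bmul (some b) (bmul x (some c)) = bmul (some d) (bmul x (some e)))).card + (Finset.univ.filter (fun x => ¬ (bmul (some b) (bmul x (some c)) = bmul (some d) (bmul x (some e))))).card
        = Fintype.card (Brandt n) :=
      Finset.card_filter_add_card_filter_not _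
    have hcard : Fintype.card (Brandt n) = n ^ 2 + 1 := by
      simp [Brandt, Fintype.card_option, sq]
    omega
  · rfl
end
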